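/- arXiv:1601.04731 — 2 statements merged into one kernel-verified Lean document; each statement's English description precedes it below -/
import Mathlib

section
/- Let D_1,...,D_N be i.i.d. random variables with |D_i| ~ Gamma(1,√2) (i.e., D_i Laplace with mean 0 and variance 1), and set Q(N) = (1/N)Σ_{i=1}^N |D_i|. Then for every x > 3/(2√2), the tail probabilities are monotone decreasing in N: Pr(Q(1) ≥ x) ≥ Pr(Q(2) ≥ x) ≥ ... ≥ Pr(Q(N) ≥ x) ≥ .... -/
/-!
Since `|Dᵢ| ∼ Exp(r)` with `r = √2`, convolving one exponential at a time shows that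
`Sₙ = |D₀| + ⋯ + |Dₙ₋₁|` is Erlang: `P(Sₙ ≥ t) = Eₙ(r t)` for `t > 0`, where
`Eₙ(u) = e⁻ᵘ ∑_{k<n} uᵏ/k!`. With `c = r x ≥ 3/2` the claim becomes `Eₙ₊₁((n+1)c) ≤ Eₙ(nc)`.
As `Eₙ₊₁(b) = Eₙ(b) + e⁻ᵇbⁿ/n!` and `-Eₙ'` is the density `e⁻ᵗtⁿ⁻¹/(n-1)!`, it suffices that this
density has mass at least `e⁻ᵇbⁿ/n!` on `[a, b] = [nc, (n+1)c]`. There it decays at rate at least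
`κ = 1 - (n-1)/a`, so its mass is at least `(e^{κc} - 1)/κ` times its value at `b`, and
`e^{κc} - 1 ≥ κ c (1 + 1/n)` because `κ c = c - 1 + 1/n ≥ 1/2 + 1/n`.
-/

open MeasureTheory ProbabilityTheory Finset Real Set
open scoped Nat

noncomputable def expPartialSum (n : ℕ) (u : ℝ) : ℝ := ∑ k ∈ range n, u ^ k / k !

/-- `P(Γ(n, 1) ≥ u) = P(Poisson(u) < n)` for `n ≥ 1` and `u ≥ 0`. -/
noncomputable def erlangTail (n : ℕ) (u : ℝ) : ℝ := exp (-u) * expPartialSum n u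

lemma expPartialSum_succ (n : ℕ) (u : ℝ) :
    expPartialSum (n + 1) u = expPartialSum n u + u ^ n / n ! :=
  sum_range_succ _ _

lemma hasDerivAt_expPartialSum (n : ℕ) (u : ℝ) :
    HasDerivAt (expPartialSum (n + 1)) (expPartialSum n u) u := by
  induction n with
  | zero =>
    have h1 : expPartialSum 1 = fun _ => 1 := funext fun v => by simp [expPartialSum]
    simpa [h1, expPartialSum] using hasDerivAt_const u (1 : ℝ)
  | succ n ih =>
    have hpow : HasDerivAt (fun v : ℝ => v ^ (n + 1) / (n + 1)!) (u ^ n / n !) u := by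
      refine ((hasDerivAt_pow (n + 1) u).div_const ((n + 1)! : ℝ)).congr_deriv ?_
      rw [Nat.factorial_succ, Nat.add_sub_cancel]
      push_cast
      field_simp
    rw [funext (expPartialSum_succ (n + 1)), expPartialSum_succ]
    exact ih.add hpow

lemma continuous_expPartialSum (n : ℕ) : Continuous (expPartialSum n) := by
  unfold expPartialSum; fun_prop

lemma erlangTail_succ (n : ℕ) (u : ℝ) :
    erlangTail (n + 1) u = erlangTail n u + exp (-u) * u ^ n / n ! := by
  rw [erlangTail, erlangTail, expPartialSum_succ]; ring

lemma erlangTail_succ_zero (n : ℕ) : erlangTail (n + 1) 0 = 1 := by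
  simp [erlangTail, expPartialSum, sum_range_succ']

lemma erlangTail_le_one (n : ℕ) {u : ℝ} (hu : 0 ≤ u) : erlangTail n u ≤ 1 := by
  rw [erlangTail, exp_neg, inv_mul_le_iff₀ (exp_pos u), mul_one]
  exact sum_le_exp_of_nonneg hu n

lemma continuous_erlangTail (n : ℕ) : Continuous (erlangTail n) := by
  unfold erlangTail; have := continuous_expPartialSum n; fun_prop

lemma hasDerivAt_erlangTail (n : ℕ) (u : ℝ) :
    HasDerivAt (erlangTail (n + 1)) (erlangTail n u - erlangTail (n + 1) u) u := by
  have h := ((hasDerivAt_neg u).exp).mul (hasDerivAt_expPartialSum n u)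
  exact h.congr_deriv (by simp only [erlangTail]; ring)

lemma exp_neg_mul_pow_mul_exp_le (m : ℕ) {a t b : ℝ} (ha : 0 < a) (hat : a ≤ t) (htb : t ≤ b) :
    exp (-b) * b ^ m * exp ((1 - m / a) * (b - t)) ≤ exp (-t) * t ^ m := by
  have ht : 0 < t := ha.trans_le hat
  have hb : b ≤ t * exp ((b - t) / a) := calc
    b = t * (1 + (b - t) / t) := by field_simp; ring
    _ ≤ t * (1 + (b - t) / a) := by gcongr
    _ ≤ t * exp ((b - t) / a) := by gcongr; linarith [add_one_le_exp ((b - t) / a)]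
  calc exp (-b) * b ^ m * exp ((1 - m / a) * (b - t))
      ≤ exp (-b) * (t * exp ((b - t) / a)) ^ m * exp ((1 - m / a) * (b - t)) := by
        gcongr; linarith
    _ = exp (-t) * t ^ m := by
        have hexp :
            exp (-t) = exp (-b) * exp (m * ((b - t) / a)) * exp ((1 - m / a) * (b - t)) := by
          rw [← exp_add, ← exp_add]; congr 1; field_simp; ring
        rw [mul_pow, ← exp_nat_mul, hexp]; ring

lemma mul_one_add_le_exp_sub_one {u s : ℝ} (hs : 0 ≤ s) (hu : 1 / 2 + s ≤ u) :
    u * (1 + s) ≤ exp u - 1 := by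
  have hu0 : 0 ≤ u := by linarith
  have hexp : ∑ i ∈ range 4, u ^ i / i ! ≤ exp u := sum_le_exp_of_nonneg hu0 4
  simp only [sum_range_succ, sum_range_zero, Nat.factorial] at hexp
  norm_num at hexp
  have hs' : s ≤ u / 2 + u ^ 2 / 6 := by nlinarith [sq_nonneg (u - 3 / 2)]
  nlinarith [mul_le_mul_of_nonneg_left hs' hu0]

lemma le_erlangTail_sub (m : ℕ) {a b : ℝ} (ha : 0 < a) (hab : a ≤ b) (hκ : 0 < 1 - m / a) :
    exp (-b) * b ^ m / m ! * ((exp ((1 - m / a) * (b - a)) - 1) / (1 - m / a)) ≤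
      erlangTail (m + 1) a - erlangTail (m + 1) b := by
  set κ : ℝ := 1 - m / a with hκ_def
  set K : ℝ := exp (-b) * b ^ m / m ! with hK_def
  have hderiv : ∀ t, HasDerivAt (fun t => erlangTail (m + 1) t - K * exp (κ * (b - t)) / κ)
      (erlangTail m t - erlangTail (m + 1) t + K * exp (κ * (b - t))) t := fun t => by
    have hexp := (((hasDerivAt_id' t).const_sub b).const_mul κ).exp
    refine ((hasDerivAt_erlangTail m t).sub ((hexp.const_mul K).div_const κ)).congr_deriv ?_
    field_simp
    ring
  -- `ψ' ≤ 0` says that the Erlang density `e⁻ᵗtᵐ/m!` dominates `K e^{κ(b-t)}` on `[a, b]`.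
  have hψ : AntitoneOn (fun t => erlangTail (m + 1) t - K * exp (κ * (b - t)) / κ) (Icc a b) := by
    refine antitoneOn_of_hasDerivWithinAt_nonpos (convex_Icc a b)
      (continuous_iff_continuousAt.2 fun t => (hderiv t).continuousAt).continuousOn
      (fun t _ => (hderiv t).hasDerivWithinAt) fun t ht => ?_
    rw [interior_Icc] at ht
    have hpt := exp_neg_mul_pow_mul_exp_le m ha ht.1.le ht.2.le
    rw [← hκ_def] at hpt
    have : K * exp (κ * (b - t)) ≤ exp (-t) * t ^ m / m ! := by
      rw [hK_def, div_mul_eq_mul_div]; exact div_le_div_of_nonneg_right hpt (by positivity)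
    rw [erlangTail_succ]
    linarith
  have hab' := hψ ⟨le_rfl, hab⟩ ⟨hab, le_rfl⟩ hab
  simp only [sub_self, mul_zero, exp_zero, mul_one] at hab'
  have : K * ((exp (κ * (b - a)) - 1) / κ) = K * exp (κ * (b - a)) / κ - K / κ := by ring
  linarith

lemma erlangTail_succ_mul_le {n : ℕ} (hn : 1 ≤ n) {c : ℝ} (hc : 3 / 2 ≤ c) :
    erlangTail (n + 1) ((n + 1) * c) ≤ erlangTail n (n * c) := by
  obtain ⟨m, rfl⟩ := Nat.exists_eq_add_of_le' hn
  push_cast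
  set a : ℝ := (m + 1) * c with ha_def
  set b : ℝ := (m + 1 + 1) * c with hb_def
  set κ : ℝ := 1 - m / a with hκ_def
  have hs : (0 : ℝ) < 1 / (m + 1) := by positivity
  have hκc : κ * c = c - 1 + 1 / (m + 1) := by
    rw [hκ_def, ha_def]; field_simp; ring
  have hκ : 0 < κ := pos_of_mul_pos_left (by rw [hκc]; linarith) (by linarith)
  have hmass := le_erlangTail_sub m (a := a) (b := b) (by positivity) (by linarith) hκ
  rw [show b - a = c by rw [ha_def, hb_def]; ring] at hmass
  have hgain : c * (1 + 1 / (m + 1)) ≤ (exp (κ * c) - 1) / κ := by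
    rw [le_div_iff₀ hκ]
    linarith [mul_one_add_le_exp_sub_one hs.le (u := κ * c) (by rw [hκc]; linarith)]
  have hlast : exp (-b) * b ^ (m + 1) / (m + 1)! =
      exp (-b) * b ^ m / m ! * (c * (1 + 1 / (m + 1))) := by
    rw [hb_def, Nat.factorial_succ]; push_cast; field_simp; ring
  rw [erlangTail_succ, hlast]
  linarith [mul_le_mul_of_nonneg_left hgain (by positivity : 0 ≤ exp (-b) * b ^ m / m !)]

/-- `P(S < t)` for a sum `S` of `n` i.i.d. `Exp(r)` variables; with the strict inequality the
case `n = 0`, the point mass at `0`, fits the same formula. -/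
noncomputable def erlangCDF (n : ℕ) (r t : ℝ) : ℝ :=
  if t ≤ 0 then 0 else 1 - erlangTail n (r * t)

lemma integral_exp_mul_one_sub_erlangTail (r : ℝ) (n : ℕ) (t : ℝ) :
    ∫ y in 0..t, r * exp (-(r * y)) * (1 - erlangTail n (r * (t - y))) =
      1 - erlangTail (n + 1) (r * t) := by
  have hderiv : ∀ y, HasDerivAt (fun y => -exp (-(r * y)) * (1 - erlangTail (n + 1) (r * (t - y))))
      (r * exp (-(r * y)) * (1 - erlangTail n (r * (t - y)))) y := fun y => by
    have hexp : HasDerivAt (fun y => -exp (-(r * y))) (r * exp (-(r * y))) y :=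
      hasDerivAt_neg_exp_mul_exp
    have htail := (hasDerivAt_erlangTail n (r * (t - y))).comp y
      (((hasDerivAt_id' y).const_sub t).const_mul r)
    refine (hexp.mul (htail.const_sub 1)).congr_deriv ?_
    simp only [Function.comp_apply]
    ring
  rw [intervalIntegral.integral_eq_sub_of_hasDerivAt (fun y _ => hderiv y)
    (by have := continuous_erlangTail n; exact Continuous.intervalIntegrable (by fun_prop) _ _)]
  simp [erlangTail_succ_zero]

lemma lintegral_erlangCDF_sub {r : ℝ} (hr : 0 < r) (n : ℕ) (t : ℝ) :
    ∫⁻ y, ENNReal.ofReal (erlangCDF n r (t - y)) ∂(gammaMeasure 1 r) =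
      ENNReal.ofReal (erlangCDF (n + 1) r t) := by
  set g : ℝ → ℝ := fun y => r * exp (-(r * y)) * (1 - erlangTail n (r * (t - y)))
  have hdensity : ∀ y, gammaPDF 1 r y * ENNReal.ofReal (erlangCDF n r (t - y)) =
      (Ico 0 t).indicator (fun y => ENNReal.ofReal (g y)) y := by
    intro y
    by_cases hy : y ∈ Ico 0 t
    · rw [indicator_of_mem hy, show gammaPDF 1 r y = exponentialPDF r y from rfl,
        exponentialPDF_of_nonneg hy.1, erlangCDF, if_neg (by linarith [hy.2]),
        ← ENNReal.ofReal_mul (by positivity)]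
    · rw [indicator_of_notMem hy]
      rcases lt_or_ge y 0 with hy0 | hy0
      · rw [gammaPDF_of_neg hy0, zero_mul]
      · have : t ≤ y := not_lt.1 fun h => hy ⟨hy0, h⟩
        rw [erlangCDF, if_pos (by linarith), ENNReal.ofReal_zero, mul_zero]
  rw [gammaMeasure, lintegral_withDensity_eq_lintegral_mul_non_measurable _
      (show Measurable (gammaPDF 1 r) from (measurable_gammaPDFReal 1 r).ennreal_ofReal)
      (ae_of_all _ fun _ => ENNReal.ofReal_lt_top)]
  simp only [Pi.mul_apply, hdensity]
  rw [lintegral_indicator measurableSet_Ico]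
  rcases le_or_gt t 0 with ht | ht
  · rw [Ico_eq_empty (not_lt.2 ht), Measure.restrict_empty, lintegral_zero_measure, erlangCDF,
      if_pos ht, ENNReal.ofReal_zero]
  have hg_cont : Continuous g := by have := continuous_erlangTail n; fun_prop
  rw [erlangCDF, if_neg (not_le.2 ht), ← integral_exp_mul_one_sub_erlangTail,
    intervalIntegral.integral_of_le ht.le, ← integral_Ico_eq_integral_Ioc,
    ofReal_integral_eq_lintegral_ofReal (hg_cont.integrableOn_Icc.mono_set Ico_subset_Icc_self)]
  refine (ae_restrict_mem measurableSet_Ico).mono fun y hy => ?_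
  have := erlangTail_le_one n (mul_nonneg hr.le (sub_nonneg.2 hy.2.le))
  exact mul_nonneg (by positivity) (sub_nonneg.2 this)

lemma measure_sum_range_lt_eq_erlangCDF {Ω : Type*} [MeasurableSpace Ω] {P : Measure Ω}
    [IsProbabilityMeasure P] {r : ℝ} (hr : 0 < r) {Y : ℕ → Ω → ℝ} (hY : ∀ i, Measurable (Y i))
    (hindep : iIndepFun Y P) (hlaw : ∀ i, P.map (Y i) = gammaMeasure 1 r) (n : ℕ) (t : ℝ) :
    P {ω | ∑ i ∈ range n, Y i ω < t} = ENNReal.ofReal (erlangCDF n r t) := by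
  induction n generalizing t with
  | zero =>
    rcases le_or_gt t 0 with ht | ht
    · simp [erlangCDF, ht, not_lt.2 ht]
    · simp [erlangCDF, ht, not_le.2 ht, erlangTail, expPartialSum]
  | succ n ih =>
    set S : Ω → ℝ := fun ω => ∑ i ∈ range n, Y i ω
    have hS : Measurable S := Finset.measurable_sum _ fun i _ => hY i
    have hindep' : IndepFun S (Y n) P := by
      simpa [S, ← Finset.sum_apply] using hindep.indepFun_sum_range_succ hY n
    have hhalf : MeasurableSet {p : ℝ × ℝ | p.1 + p.2 < t} :=
      measurableSet_lt (measurable_fst.add measurable_snd) measurable_const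
    have hset : {ω | ∑ i ∈ range (n + 1), Y i ω < t} =
        (fun ω => (S ω, Y n ω)) ⁻¹' {p : ℝ × ℝ | p.1 + p.2 < t} := by
      ext ω; simp [S, sum_range_succ]
    rw [hset, ← Measure.map_apply (hS.prodMk (hY n)) hhalf,
      (indepFun_iff_map_prod_eq_prod_map_map hS.aemeasurable (hY n).aemeasurable).1 hindep',
      Measure.prod_apply_symm hhalf, hlaw n, ← lintegral_erlangCDF_sub hr]
    refine lintegral_congr fun y => ?_
    have hslice : (fun x => (x, y)) ⁻¹' {p : ℝ × ℝ | p.1 + p.2 < t} = Iio (t - y) := by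
      ext x; simp [lt_sub_iff_add_lt]
    rw [hslice, Measure.map_apply hS measurableSet_Iio, ← ih]
    rfl

lemma measure_le_mean_eq_erlangTail {Ω : Type*} [MeasurableSpace Ω] {P : Measure Ω}
    [IsProbabilityMeasure P] {r : ℝ} (hr : 0 < r) {Y : ℕ → Ω → ℝ} (hY : ∀ i, Measurable (Y i))
    (hindep : iIndepFun Y P) (hlaw : ∀ i, P.map (Y i) = gammaMeasure 1 r) {x : ℝ} (hx : 0 < x)
    {n : ℕ} (hn : 0 < n) :
    P {ω | x ≤ 1 / (n : ℝ) * ∑ i ∈ range n, Y i ω} =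
      ENNReal.ofReal (erlangTail n (n * (r * x))) := by
  have hn' : (0 : ℝ) < n := Nat.cast_pos.2 hn
  have hset : {ω | x ≤ 1 / (n : ℝ) * ∑ i ∈ range n, Y i ω} =
      {ω | ∑ i ∈ range n, Y i ω < n * x}ᶜ := by
    ext ω
    simp only [mem_ofPred_eq, mem_compl_iff, not_lt, one_div_mul_eq_div, le_div_iff₀ hn', mul_comm]
  have hmeas : MeasurableSet {ω | ∑ i ∈ range n, Y i ω < n * x} :=
    measurableSet_lt (Finset.measurable_sum _ fun i _ => hY i) measurable_const
  have hle := erlangTail_le_one n (u := n * (r * x)) (by positivity)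
  rw [hset, prob_compl_eq_one_sub hmeas, measure_sum_range_lt_eq_erlangCDF hr hY hindep hlaw,
    erlangCDF, if_neg (not_le.2 (by positivity)), mul_left_comm, ← ENNReal.ofReal_one,
    ← ENNReal.ofReal_sub _ (sub_nonneg.2 hle), sub_sub_cancel]

/-- Signal detection: tail probabilities of averages of i.i.d. Gamma(1,√2)
variables are monotone decreasing in the sample size for x > 3/(2√2). -/
theorem snr_tail_monotone
    {Ω : Type*} [MeasurableSpace Ω] (P : Measure Ω) [IsProbabilityMeasure P]
    (D : ℕ → Ω → ℝ)
    (hmeas : ∀ i, Measurable (D i))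
    (hindep : iIndepFun D P)
    (hlaw : ∀ i, Measure.map (fun ω => |D i ω|) P = gammaMeasure 1 (Real.sqrt 2))
    (x : ℝ) (hx : 3 / (2 * Real.sqrt 2) < x) :
    ∀ N : ℕ, 1 ≤ N →
      P {ω | x ≤ (1 / ((N : ℝ) + 1)) * ∑ i ∈ Finset.range (N + 1), |D i ω|} ≤
        P {ω | x ≤ (1 / (N : ℝ)) * ∑ i ∈ Finset.range N, |D i ω|} := by
  intro N hN
  have hr : 0 < √2 := by positivity
  have hx0 : 0 < x := lt_trans (by positivity) hx
  have hc : 3 / 2 ≤ √2 * x := by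
    have := (div_lt_iff₀ (by positivity)).1 hx
    nlinarith
  have habs_meas : ∀ i, Measurable fun ω => |D i ω| := fun i => (hmeas i).abs
  have habs_indep : iIndepFun (fun i ω => |D i ω|) P :=
    hindep.comp (fun _ => abs) fun _ => measurable_abs
  have hmean_succ :=
    measure_le_mean_eq_erlangTail hr habs_meas habs_indep hlaw hx0 N.succ_pos
  push_cast at hmean_succ
  rw [hmean_succ, measure_le_mean_eq_erlangTail hr habs_meas habs_indep hlaw hx0 hN]
  exact ENNReal.ofReal_le_ofReal (erlangTail_succ_mul_le hN hc)
end

section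
/- Let X_1,...,X_n be i.i.d. Gamma(α,β) with α,β>0. Suppose μ ≺ λ with common sum s, μ ≠ λ (as multisets). Then the CDFs F_μ(x) = Pr(Σ_i μ_i X_i < x) and F_λ(x) = Pr(Σ_i λ_i X_i < x) must cross at least once on (0,∞): there exist 0 < x_1 < x_2 such that F_μ(x_1) < F_λ(x_1) and F_μ(x_2) > F_λ(x_2), provided α > 1 and n ≥ 3 (or n = 2 and α > 0). -/
open MeasureTheory ProbabilityTheory Finset

/-!
Write `Y = ∑ μᵢ Xᵢ` and `Z = ∑ λᵢ Xᵢ`. Both are nonnegative with the same mean `s · E X₁`, and by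
independence `Var (∑ cᵢ Xᵢ) = (∑ cᵢ²) · Var X₁`. Majorization gives `∑ μᵢ² < ∑ λᵢ²`, since
`∑ λᵢ² - ∑ μᵢ² = ∑ (λᵢ - μᵢ)² + 2 ∑ μᵢ (λᵢ - μᵢ)` and the last sum is nonnegative by Abel summation
against the nonnegative partial sums of `λ - μ`; hence `Var Y < Var Z`.

By the layer-cake formula, `D t = P (Y < t) - P (Z < t)` satisfies `∫₀^∞ D = E Z - E Y = 0` and
`∫₀^∞ t D(t) dt = (E Z² - E Y²) / 2 > 0`. If no negative value of `D` preceded a positive one, then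
`(t - c) D(t) ≤ 0` for `c` the infimum of the points where `D < 0`, and integrating would give
`∫ t D ≤ c ∫ D = 0`.
-/

theorem sum_range_mul_nonneg_of_antitone {w d : ℕ → ℝ} {n : ℕ} (hw : Antitone w)
    (hw0 : ∀ i, 0 ≤ w i) (hd : ∀ k ≤ n, 0 ≤ ∑ i ∈ range k, d i) :
    0 ≤ ∑ i ∈ range n, w i * d i := by
  have hparts := sum_range_by_parts w d n
  simp only [smul_eq_mul] at hparts
  rw [hparts, sub_nonneg]
  calc ∑ i ∈ range (n - 1), (w (i + 1) - w i) * ∑ j ∈ range (i + 1), d j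
      ≤ 0 := sum_nonpos fun i hi =>
        mul_nonpos_of_nonpos_of_nonneg (sub_nonpos.2 (hw (Nat.le_succ i)))
          (hd _ (by have := mem_range.1 hi; omega))
    _ ≤ w (n - 1) * ∑ i ∈ range n, d i := mul_nonneg (hw0 _) (hd n le_rfl)

theorem sum_filter_val_lt_eq_sum_range {n : ℕ} (f : Fin n → ℝ) (k : ℕ) :
    ∑ i ∈ univ.filter (fun i : Fin n => (i : ℕ) < k), f i =
      ∑ i ∈ range k, if h : i < n then f ⟨i, h⟩ else 0 := by
  induction k with
  | zero => simp
  | succ k ih =>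
    rw [sum_range_succ, ← ih]
    split_ifs with h
    · rw [show univ.filter (fun i : Fin n => (i : ℕ) < k + 1) =
          insert ⟨k, h⟩ (univ.filter fun i : Fin n => (i : ℕ) < k) by
            ext i; simp only [mem_filter, mem_univ, true_and, mem_insert, Fin.ext_iff]; omega,
        sum_insert (by simp), add_comm]
    · rw [add_zero]
      congr 1
      ext i; simp only [mem_filter, mem_univ, true_and]; omega

theorem sum_sq_lt_sum_sq_of_majorizes {n : ℕ} {lam mu : Fin n → ℝ} (hmono : Antitone mu)
    (hnn : ∀ i, 0 ≤ mu i)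
    (hpartial : ∀ k : ℕ, k < n →
      ∑ i ∈ univ.filter (fun i : Fin n => (i : ℕ) < k), mu i ≤
        ∑ i ∈ univ.filter (fun i : Fin n => (i : ℕ) < k), lam i)
    (hsum : ∑ i, lam i = ∑ i, mu i) (hne : mu ≠ lam) :
    ∑ i, mu i ^ 2 < ∑ i, lam i ^ 2 := by
  set w : ℕ → ℝ := fun i => if h : i < n then mu ⟨i, h⟩ else 0
  set d : ℕ → ℝ := fun i => if h : i < n then lam ⟨i, h⟩ - mu ⟨i, h⟩ else 0
  have hw : Antitone w := by
    intro i j hij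
    simp only [w]
    split_ifs with hj hi hi
    · exact hmono (Fin.mk_le_mk.2 hij)
    · omega
    · exact hnn _
    · rfl
  have hd : ∀ k ≤ n, 0 ≤ ∑ i ∈ range k, d i := by
    intro k hk
    rw [← sum_filter_val_lt_eq_sum_range (fun i => lam i - mu i) k, sum_sub_distrib, sub_nonneg]
    rcases hk.lt_or_eq with hk | rfl
    · exact hpartial k hk
    · simp [hsum]
  have hcross : 0 ≤ ∑ i, mu i * (lam i - mu i) := by
    have hw0 : ∀ i, 0 ≤ w i := fun i => by simp only [w]; split_ifs <;> simp [hnn]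
    have := sum_range_mul_nonneg_of_antitone hw hw0 hd
    rw [← Fin.sum_univ_eq_sum_range] at this
    simpa [w, d] using this
  have hdiff : 0 < ∑ i, (lam i - mu i) ^ 2 := by
    obtain ⟨i, hi⟩ := Function.ne_iff.1 hne
    exact sum_pos' (fun j _ => sq_nonneg _) ⟨i, mem_univ _, by positivity⟩
  have hsplit : ∑ i, lam i ^ 2 =
      ∑ i, mu i ^ 2 + ∑ i, (lam i - mu i) ^ 2 + 2 * ∑ i, mu i * (lam i - mu i) := by
    rw [mul_sum, ← sum_add_distrib, ← sum_add_distrib]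
    exact sum_congr rfl fun i _ => by ring
  linarith

section Gamma

open Real Set

variable {a r : ℝ}

theorem integral_pow_gammaMeasure (ha : 0 < a) (hr : 0 < r) (p : ℕ) :
    ∫ x, x ^ p ∂gammaMeasure a r = Gamma (a + p) / (Gamma a * r ^ p) := by
  rw [gammaMeasure, integral_withDensity_eq_integral_toReal_smul
      (f := gammaPDF a r) (measurable_gammaPDFReal a r).ennreal_ofReal
      (ae_of_all _ fun _ => ENNReal.ofReal_lt_top),
    ← setIntegral_eq_integral_of_forall_compl_eq_zero (s := Ici 0) fun x hx => by
      simp [gammaPDF, gammaPDFReal, (not_le.1 (mem_Ici.not.1 hx)).not_ge],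
    integral_Ici_eq_integral_Ioi]
  have hpdf : ∀ x ∈ Ioi (0 : ℝ), (gammaPDF a r x).toReal • x ^ p
      = r ^ a / Gamma a * (x ^ (a + p - 1) * exp (-(r * x))) := by
    intro x hx
    rw [gammaPDF, ENNReal.toReal_ofReal (gammaPDFReal_nonneg ha hr x), gammaPDFReal,
      if_pos (le_of_lt hx), smul_eq_mul, add_sub_right_comm, rpow_add hx, rpow_natCast]
    ring
  rw [setIntegral_congr_fun measurableSet_Ioi hpdf, integral_const_mul,
    integral_rpow_mul_exp_neg_mul_Ioi (by positivity) hr, one_div, inv_rpow hr.le,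
    rpow_add hr, rpow_natCast]
  field_simp

theorem integrable_pow_gammaMeasure (ha : 0 < a) (hr : 0 < r) (p : ℕ) :
    Integrable (fun x : ℝ => x ^ p) (gammaMeasure a r) := by
  refine .of_integral_ne_zero ?_
  rw [integral_pow_gammaMeasure ha hr]
  have := Gamma_pos_of_pos (show 0 < a + p by positivity)
  have := Gamma_pos_of_pos ha
  positivity

theorem memLp_id_gammaMeasure (ha : 0 < a) (hr : 0 < r) : MemLp id 2 (gammaMeasure a r) :=
  (memLp_two_iff_integrable_sq aestronglyMeasurable_id).2 (integrable_pow_gammaMeasure ha hr 2)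

theorem integral_id_gammaMeasure (ha : 0 < a) (hr : 0 < r) :
    ∫ x, x ∂gammaMeasure a r = a / r := by
  have h1 := integral_pow_gammaMeasure ha hr 1
  rw [Nat.cast_one, Gamma_add_one ha.ne', pow_one, mul_comm a,
    mul_div_mul_left _ _ (Gamma_pos_of_pos ha).ne'] at h1
  simpa using h1

theorem variance_id_gammaMeasure (ha : 0 < a) (hr : 0 < r) :
    Var[id; gammaMeasure a r] = a / r ^ 2 := by
  have := isProbabilityMeasure_gammaMeasure ha hr
  have h2 := integral_pow_gammaMeasure ha hr 2
  rw [show a + ((2 : ℕ) : ℝ) = a + 1 + 1 by push_cast; ring, Gamma_add_one (by positivity),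
    Gamma_add_one ha.ne'] at h2
  rw [variance_eq_sub (memLp_id_gammaMeasure ha hr)]
  simp only [Pi.pow_apply, id_eq]
  rw [h2, integral_id_gammaMeasure ha hr]
  field_simp
  ring

theorem ae_nonneg_gammaMeasure (a r : ℝ) : ∀ᵐ x ∂gammaMeasure a r, 0 ≤ x := by
  rw [ae_iff, gammaMeasure]
  simp only [not_le]
  exact (withDensity_apply _ measurableSet_Iio).trans (lintegral_gammaPDF_of_nonpos le_rfl)

end Gamma

section Crossing

open Set

variable {Ω : Type*} [MeasurableSpace Ω] {P : Measure Ω}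

theorem integral_Ioi_pow_mul_measureReal_le [IsFiniteMeasure P] {W : Ω → ℝ} (p : ℕ)
    (hW : AEMeasurable W P) (hnn : 0 ≤ᵐ[P] W) (hint : Integrable (fun ω => W ω ^ (p + 1)) P) :
    IntegrableOn (fun t => t ^ p * P.real {ω | t ≤ W ω}) (Ioi 0) ∧
      ∫ t in Ioi 0, t ^ p * P.real {ω | t ≤ W ω} = (∫ ω, W ω ^ (p + 1) ∂P) / (p + 1) := by
  set F : ℝ → ℝ := fun t => t ^ p * P.real {ω | t ≤ W ω}
  have hF_nn : 0 ≤ᵐ[volume.restrict (Ioi 0)] F :=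
    (ae_restrict_iff' measurableSet_Ioi).2 <| ae_of_all _ fun t ht =>
      mul_nonneg (pow_nonneg (le_of_lt ht) p) measureReal_nonneg
  have hF_meas : AEStronglyMeasurable F (volume.restrict (Ioi 0)) :=
    ((measurable_id.pow_const p).mul (Antitone.measurable fun s t hst =>
      measureReal_mono fun ω (h : t ≤ W ω) => hst.trans h)).aestronglyMeasurable
  have hint' : Integrable (fun ω => W ω ^ (p + 1) / (p + 1)) P := hint.div_const _
  have hlayer : ∫⁻ t in Ioi 0, ENNReal.ofReal (F t) =
      ENNReal.ofReal (∫ ω, W ω ^ (p + 1) / (p + 1) ∂P) := by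
    rw [ofReal_integral_eq_lintegral_ofReal hint'
      (hnn.mono fun ω (h : 0 ≤ W ω) => by positivity)]
    have := lintegral_comp_eq_lintegral_meas_le_mul P hnn hW (g := fun t => t ^ p)
      (fun t _ => (continuous_pow p).intervalIntegrable _ _)
      ((ae_restrict_iff' measurableSet_Ioi).2 <| ae_of_all _ fun t ht =>
        pow_nonneg (le_of_lt ht) p)
    simp only [integral_pow, zero_pow (Nat.succ_ne_zero p), sub_zero] at this
    rw [this]
    refine setLIntegral_congr_fun measurableSet_Ioi fun t ht => ?_
    rw [ENNReal.ofReal_mul (pow_nonneg (le_of_lt ht) p), ofReal_measureReal, mul_comm]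
  have hfin : HasFiniteIntegral F (volume.restrict (Ioi 0)) := by
    rw [hasFiniteIntegral_iff_ofReal hF_nn, hlayer]
    exact ENNReal.ofReal_lt_top
  refine ⟨⟨hF_meas, hfin⟩, ?_⟩
  rw [integral_eq_lintegral_of_nonneg_ae hF_nn hF_meas, hlayer, ENNReal.toReal_ofReal
    (integral_nonneg_of_ae (hnn.mono fun ω (h : 0 ≤ W ω) => by positivity)), integral_div]

theorem exists_neg_pos_of_setIntegral_eq_zero_of_setIntegral_mul_pos {D : ℝ → ℝ}
    (hD : IntegrableOn D (Ioi 0)) (htD : IntegrableOn (fun t => t * D t) (Ioi 0))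
    (h0 : ∫ t in Ioi 0, D t = 0) (h1 : 0 < ∫ t in Ioi 0, t * D t) :
    ∃ a b, 0 < a ∧ a < b ∧ D a < 0 ∧ 0 < D b := by
  by_contra! hcross
  by_cases hneg : ∃ a, 0 < a ∧ D a < 0
  · set c := sInf {a | 0 < a ∧ D a < 0}
    have hbdd : BddBelow {a | 0 < a ∧ D a < 0} := ⟨0, fun a ha => ha.1.le⟩
    have hsign : ∀ t ∈ Ioi (0 : ℝ), (t - c) * D t ≤ 0 := by
      intro t ht
      rcases lt_or_ge t c with htc | htc
      · exact mul_nonpos_of_nonpos_of_nonneg (sub_nonpos.2 htc.le)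
          (not_lt.1 fun h => (csInf_le hbdd ⟨ht, h⟩).not_gt htc)
      rcases htc.eq_or_lt with rfl | htc
      · simp
      · obtain ⟨a, ⟨ha, hDa⟩, hat⟩ := exists_lt_of_csInf_lt hneg htc
        exact mul_nonpos_of_nonneg_of_nonpos (sub_nonneg.2 htc.le) (hcross a t ha hat hDa)
    have : ∫ t in Ioi 0, (t - c) * D t ≤ 0 := setIntegral_nonpos measurableSet_Ioi hsign
    rw [show (fun t => (t - c) * D t) = fun t => t * D t - c * D t by ext; ring,
      integral_sub htD (hD.const_mul c), integral_const_mul, h0] at this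
    linarith
  · push Not at hneg
    have hD_ae : D =ᵐ[volume.restrict (Ioi 0)] 0 :=
      (setIntegral_eq_zero_iff_of_nonneg_ae
        ((ae_restrict_iff' measurableSet_Ioi).2 (ae_of_all _ hneg)) hD).1 h0
    rw [integral_congr_ae (g := fun _ => 0) (hD_ae.mono fun t (h : D t = 0) => by simp [h]),
      integral_zero] at h1
    exact h1.false

theorem measureReal_lt_eq_one_sub [IsProbabilityMeasure P] {W : Ω → ℝ} (hW : AEMeasurable W P)
    (t : ℝ) : P.real {ω | W ω < t} = 1 - P.real {ω | t ≤ W ω} := by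
  convert probReal_compl_eq_one_sub₀ (hW.nullMeasurable (measurableSet_Ici (a := t))) using 2
  · ext ω
    simp
  · rfl

theorem exists_measure_lt_crossing_of_variance_lt [IsProbabilityMeasure P] {Y Z : Ω → ℝ}
    (hY : MemLp Y 2 P) (hZ : MemLp Z 2 P) (hY0 : 0 ≤ᵐ[P] Y) (hZ0 : 0 ≤ᵐ[P] Z)
    (hmean : P[Y] = P[Z]) (hvar : Var[Y; P] < Var[Z; P]) :
    ∃ x₁ x₂, 0 < x₁ ∧ x₁ < x₂ ∧ P {ω | Y ω < x₁} < P {ω | Z ω < x₁} ∧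
      P {ω | Z ω < x₂} < P {ω | Y ω < x₂} := by
  obtain ⟨hY₀, hY₀'⟩ := integral_Ioi_pow_mul_measureReal_le 0 hY.aemeasurable hY0
    (by simpa using hY.integrable one_le_two)
  obtain ⟨hZ₀, hZ₀'⟩ := integral_Ioi_pow_mul_measureReal_le 0 hZ.aemeasurable hZ0
    (by simpa using hZ.integrable one_le_two)
  obtain ⟨hY₁, hY₁'⟩ :=
    integral_Ioi_pow_mul_measureReal_le 1 hY.aemeasurable hY0 hY.integrable_sq
  obtain ⟨hZ₁, hZ₁'⟩ :=
    integral_Ioi_pow_mul_measureReal_le 1 hZ.aemeasurable hZ0 hZ.integrable_sq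
  simp only [pow_zero, one_mul, zero_add, pow_one, Nat.cast_zero, Nat.cast_one, div_one]
    at hY₀ hY₀' hZ₀ hZ₀' hY₁ hY₁' hZ₁ hZ₁'
  set D : ℝ → ℝ := fun t => P.real {ω | Y ω < t} - P.real {ω | Z ω < t}
  have hD : D = fun t => P.real {ω | t ≤ Z ω} - P.real {ω | t ≤ Y ω} := by
    ext t
    simp only [D, measureReal_lt_eq_one_sub hY.aemeasurable,
      measureReal_lt_eq_one_sub hZ.aemeasurable]
    ring
  obtain ⟨a, b, ha, hab, hDa, hDb⟩ :=
    exists_neg_pos_of_setIntegral_eq_zero_of_setIntegral_mul_pos (D := D)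
      (hD ▸ hZ₀.sub hY₀) (by simp only [hD, mul_sub]; exact hZ₁.sub hY₁)
      (by rw [hD, integral_sub hZ₀ hY₀, hY₀', hZ₀', hmean, sub_self])
      (by
        simp only [hD, mul_sub]
        rw [integral_sub hZ₁ hY₁, hY₁', hZ₁']
        rw [variance_eq_sub hY, variance_eq_sub hZ, hmean] at hvar
        simp only [Pi.pow_apply] at hvar
        linarith)
  refine ⟨a, b, ha, hab, ?_, ?_⟩
  · exact (ENNReal.toReal_lt_toReal (measure_ne_top _ _) (measure_ne_top _ _)).1 (sub_neg.1 hDa)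
  · exact (ENNReal.toReal_lt_toReal (measure_ne_top _ _) (measure_ne_top _ _)).1 (sub_pos.1 hDb)

end Crossing

section WeightedSum

variable {Ω ι : Type*} [MeasurableSpace Ω] {P : Measure Ω} [Fintype ι] {X : ι → Ω → ℝ}

theorem integral_weighted_sum (hX : ∀ i, Integrable (X i) P) {m : ℝ} (hm : ∀ i, P[X i] = m)
    (c : ι → ℝ) : ∫ ω, ∑ i, c i * X i ω ∂P = (∑ i, c i) * m := by
  rw [integral_finsetSum _ fun i _ => (hX i).const_mul (c i), sum_mul]
  simp only [integral_const_mul, hm]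

theorem variance_weighted_sum (hX : ∀ i, MemLp (X i) 2 P) (hindep : iIndepFun X P) {v : ℝ}
    (hv : ∀ i, Var[X i; P] = v) (c : ι → ℝ) :
    Var[fun ω => ∑ i, c i * X i ω; P] = (∑ i, c i ^ 2) * v := by
  have hsum := IndepFun.variance_sum (s := univ) (X := fun i ω => c i * X i ω)
    (fun i _ => (hX i).const_mul (c i))
    (fun i _ j _ hij => (hindep.indepFun hij).comp (measurable_const_mul (c i))
      (measurable_const_mul (c j)))
  rw [sum_mul, ← sum_fn]
  simpa only [variance_const_mul, hv] using hsum

end WeightedSum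

theorem exists_measure_lt_crossing_of_majorizes {Ω : Type*} [MeasurableSpace Ω] {P : Measure Ω}
    [IsProbabilityMeasure P] {ν : Measure ℝ}
    {n : ℕ} {X : Fin n → Ω → ℝ} (hmeas : ∀ i, AEMeasurable (X i) P) (hindep : iIndepFun X P)
    (hlaw : ∀ i, P.map (X i) = ν) (hν0 : ∀ᵐ x ∂ν, 0 ≤ x) (hν2 : MemLp id 2 ν)
    (hνvar : 0 < Var[id; ν]) {lam mu : Fin n → ℝ} (hlnn : ∀ i, 0 ≤ lam i)
    (hmmono : Antitone mu) (hmnn : ∀ i, 0 ≤ mu i)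
    (hpartial : ∀ k : ℕ, k < n →
      ∑ i ∈ univ.filter (fun i : Fin n => (i : ℕ) < k), mu i ≤
        ∑ i ∈ univ.filter (fun i : Fin n => (i : ℕ) < k), lam i)
    (hsum : ∑ i, lam i = ∑ i, mu i) (hne : mu ≠ lam) :
    ∃ x₁ x₂, 0 < x₁ ∧ x₁ < x₂ ∧
      P {ω | ∑ i, mu i * X i ω < x₁} < P {ω | ∑ i, lam i * X i ω < x₁} ∧
      P {ω | ∑ i, lam i * X i ω < x₂} < P {ω | ∑ i, mu i * X i ω < x₂} := by
  have hX2 : ∀ i, MemLp (X i) 2 P := fun i =>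
    (memLp_map_measure_iff aestronglyMeasurable_id (hmeas i)).1 (hlaw i ▸ hν2)
  have hmean : ∀ i, P[X i] = ∫ x, x ∂ν := fun i => by
    rw [← hlaw i]
    exact (integral_map (hmeas i) aestronglyMeasurable_id).symm
  have hvar : ∀ i, Var[X i; P] = Var[id; ν] := fun i => by
    rw [← hlaw i, variance_id_map (hmeas i)]
  have hsum2 : ∀ c : Fin n → ℝ, MemLp (fun ω => ∑ i, c i * X i ω) 2 P := fun c =>
    memLp_finsetSum _ fun i _ => (hX2 i).const_mul (c i)
  have hsum0 : ∀ c : Fin n → ℝ, (∀ i, 0 ≤ c i) → 0 ≤ᵐ[P] fun ω => ∑ i, c i * X i ω := by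
    intro c hc
    filter_upwards [ae_all_iff.2 fun i => ae_of_ae_map (hmeas i) (hlaw i ▸ hν0)] with ω hω
    exact sum_nonneg fun i _ => mul_nonneg (hc i) (hω i)
  refine exists_measure_lt_crossing_of_variance_lt (hsum2 mu) (hsum2 lam) (hsum0 mu hmnn)
    (hsum0 lam hlnn) ?_ ?_
  · simp only [integral_weighted_sum (fun i => (hX2 i).integrable one_le_two) hmean, hsum]
  · rw [variance_weighted_sum hX2 hindep hvar, variance_weighted_sum hX2 hindep hvar]
    exact mul_lt_mul_of_pos_right
      (sum_sq_lt_sum_sq_of_majorizes hmmono hmnn hpartial hsum hne) hνvar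

theorem gamma_convolution_cdfs_cross_general
    {Ω : Type*} [MeasurableSpace Ω] (P : Measure Ω) [IsProbabilityMeasure P]
    (n : ℕ) (X : Fin n → Ω → ℝ) (α β : ℝ) (hα : 0 < α) (hβ : 0 < β)
    (hmeas : ∀ i, Measurable (X i))
    (hindep : iIndepFun X P)
    (hlaw : ∀ i, Measure.map (X i) P = gammaMeasure α β)
    (lam mu : Fin n → ℝ) (s : ℝ)
    (hlnn : ∀ i, 0 ≤ lam i)
    (hmmono : Antitone mu) (hmpos : ∀ i, 0 < mu i)
    (hpartial : ∀ k : ℕ, k < n →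
      ∑ i ∈ univ.filter (fun i : Fin n => (i : ℕ) < k), mu i ≤
        ∑ i ∈ univ.filter (fun i : Fin n => (i : ℕ) < k), lam i)
    (hsl : ∑ i, lam i = s) (hsm : ∑ i, mu i = s)
    (hne : mu ≠ lam) :
    ∃ x₁ x₂ : ℝ, 0 < x₁ ∧ x₁ < x₂ ∧
      P {ω | ∑ i, mu i * X i ω < x₁} < P {ω | ∑ i, lam i * X i ω < x₁} ∧
      P {ω | ∑ i, lam i * X i ω < x₂} < P {ω | ∑ i, mu i * X i ω < x₂} :=
  exists_measure_lt_crossing_of_majorizes (fun i => (hmeas i).aemeasurable) hindep hlaw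
    (ae_nonneg_gammaMeasure α β) (memLp_id_gammaMeasure hα hβ)
    (by rw [variance_id_gammaMeasure hα hβ]; positivity) hlnn hmmono (fun i => (hmpos i).le)
    hpartial (hsl.trans hsm.symm) hne

/-- If μ ≺ λ with μ ≠ λ then the CDFs of the two gamma convolutions cross at
least once on (0,∞) (for α > 1, n ≥ 3, or for n = 2). -/
theorem gamma_convolution_cdfs_cross
    {Ω : Type*} [MeasurableSpace Ω] (P : Measure Ω) [IsProbabilityMeasure P]
    (n : ℕ) (X : Fin n → Ω → ℝ) (α β : ℝ) (hα : 0 < α) (hβ : 0 < β)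
    (hmeas : ∀ i, Measurable (X i))
    (hindep : iIndepFun X P)
    (hlaw : ∀ i, Measure.map (X i) P = gammaMeasure α β)
    (lam mu : Fin n → ℝ) (s : ℝ)
    (hlmono : Antitone lam) (hlnn : ∀ i, 0 ≤ lam i)
    (hmmono : Antitone mu) (hmpos : ∀ i, 0 < mu i)
    (hpartial : ∀ k : ℕ, k < n →
      ∑ i ∈ univ.filter (fun i : Fin n => (i : ℕ) < k), mu i ≤
        ∑ i ∈ univ.filter (fun i : Fin n => (i : ℕ) < k), lam i)
    (hsl : ∑ i, lam i = s) (hsm : ∑ i, mu i = s)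
    (hne : mu ≠ lam)
    (hcase : (1 < α ∧ 3 ≤ n) ∨ n = 2) :
    ∃ x₁ x₂ : ℝ, 0 < x₁ ∧ x₁ < x₂ ∧
      P {ω | ∑ i, mu i * X i ω < x₁} < P {ω | ∑ i, lam i * X i ω < x₁} ∧
      P {ω | ∑ i, lam i * X i ω < x₂} < P {ω | ∑ i, mu i * X i ω < x₂} :=
  gamma_convolution_cdfs_cross_general P n X α β hα hβ hmeas hindep hlaw lam mu s hlnn hmmono hmpos
    hpartial hsl hsm hne
end
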